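/- If limsup_{n→∞} |φ_{nn}|^{1/n} < 1, then for every n ≥ 1 the series Σ_{h=1}^∞ φ_{n+h,n+h} φ_{n+h−1,h} converges absolutely and the AR(∞) coefficient satisfies π_n = φ_{nn} − Σ_{h=1}^∞ φ_{n+h,n+h} φ_{n+h−1,h}. -/

import Mathlib

open scoped RealInnerProductSpace
open Filter Topology

set_option linter.unusedSectionVars false
set_option maxHeartbeats 1000000

/-- The closed linear span `H_I` of `{X t : t ∈ I}` in a real Hilbert space. -/
noncomputable def hSpan {H : Type*} [NormedAddCommGroup H] [InnerProductSpace ℝ H]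
    (X : ℤ → H) (I : Set ℤ) : Submodule ℝ H :=
  (Submodule.span ℝ (X '' I)).topologicalClosure

/-- The orthogonal projection `P_I v` of `v` onto the closed span `H_I`. -/
noncomputable def projSpan {H : Type*} [NormedAddCommGroup H] [InnerProductSpace ℝ H]
    [CompleteSpace H] (X : ℤ → H) (I : Set ℤ) (v : H) : H :=
  haveI : CompleteSpace (hSpan X I) :=
    (Submodule.isClosed_topologicalClosure _).completeSpace_coe
  (Submodule.orthogonalProjectionOnto (hSpan X I) v : H)

/-- The innovation `ε_t = X_t - ∑_{i ≥ 1} π_i X_{t-i}` of the AR(∞) representation. -/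
noncomputable def arEps {H : Type*} [NormedAddCommGroup H] [InnerProductSpace ℝ H]
    (X : ℤ → H) (π : ℕ → ℝ) (t : ℤ) : H :=
  X t - ∑' i : ℕ, π (i + 1) • X (t - (i + 1 : ℕ))

section R
variable {M : Type*} [AddCommMonoid M]

private lemma sum_shift (f : ℤ → M) (t : ℤ) (k : ℕ) :
    ∑ j ∈ Finset.Icc 1 k, f (t - (j : ℕ)) = ∑ r ∈ Finset.Icc (t - k) (t - 1), f r := by
  apply Finset.sum_nbij' (fun j => t - (j : ℕ)) (fun r => (t - r).toNat)
  · intro j hj; simp only [Finset.mem_Icc] at *; omega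
  · intro r hr; simp only [Finset.mem_Icc] at *; omega
  · intro j hj; simp only [Finset.mem_Icc] at hj; omega
  · intro r hr; simp only [Finset.mem_Icc] at hr; omega
  · intro j hj; rfl

private lemma sum_reflect (g : ℕ → M) (k : ℕ) :
    ∑ j ∈ Finset.Icc 1 k, g j = ∑ j ∈ Finset.Icc 1 k, g (k + 1 - j) := by
  apply Finset.sum_nbij' (fun j => k + 1 - j) (fun j => k + 1 - j)
  · intro j hj; simp only [Finset.mem_Icc] at *; omega
  · intro j hj; simp only [Finset.mem_Icc] at *; omega
  · intro j hj; simp only [Finset.mem_Icc] at hj; omega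
  · intro j hj; simp only [Finset.mem_Icc] at hj; omega
  · intro j hj; simp only [Finset.mem_Icc] at hj
    congr 1; omega
end R

section Aux
variable {H : Type*} [NormedAddCommGroup H] [InnerProductSpace ℝ H] [CompleteSpace H]

instance hSpan_complete (X : ℤ → H) (I : Set ℤ) : CompleteSpace (hSpan X I) :=
  (Submodule.isClosed_topologicalClosure _).completeSpace_coe

variable (X : ℤ → H) (γ : ℤ → ℝ) (π : ℕ → ℝ) (σε2 : ℝ)
  (hstat : ∀ s t : ℤ, ⟪X s, X t⟫ = γ (t - s))
  (hπ : Summable fun i : ℕ => |π i|)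
  (heps_orth : ∀ t s : ℤ, s ≤ t - 1 → ⟪arEps X π t, X s⟫ = 0)
  (heps_var : ∀ t : ℤ, ‖arEps X π t‖ ^ 2 = σε2)
  (hσε : 0 < σε2)

private lemma mem_hSpan {I : Set ℤ} {s : ℤ} (h : s ∈ I) : X s ∈ hSpan X I :=
  (Submodule.span ℝ (X '' I)).le_topologicalClosure (Submodule.subset_span ⟨s, h, rfl⟩)

private lemma orth_hSpan {w : H} {I : Set ℤ} (h : ∀ s ∈ I, ⟪w, X s⟫ = 0) :
    ∀ v ∈ hSpan X I, ⟪w, v⟫ = 0 := by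
  have hle : hSpan X I ≤ (ℝ ∙ w)ᗮ := by
    apply Submodule.topologicalClosure_minimal
    · rw [Submodule.span_le]
      rintro - ⟨s, hs, rfl⟩
      exact Submodule.mem_orthogonal_singleton_iff_inner_right.2 (h s hs)
    · exact Submodule.isClosed_orthogonal _
  intro v hv
  exact Submodule.mem_orthogonal_singleton_iff_inner_right.1 (hle hv)

private lemma projSpan_res_orth {I : Set ℤ} (u : H) {s : ℤ} (hs : s ∈ I) :
    ⟪u - projSpan X I u, X s⟫ = 0 :=
  Submodule.starProjection_inner_eq_zero (K := hSpan X I) u (X s) (mem_hSpan X hs)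

private lemma projSpan_eq {I : Set ℤ} {u v : H} (hm : v ∈ hSpan X I)
    (ho : ∀ s ∈ I, ⟪u - v, X s⟫ = 0) : projSpan X I u = v :=
  Submodule.eq_starProjection_of_mem_of_inner_eq_zero hm (orth_hSpan X ho)

private lemma projSpan_norm_le (I : Set ℤ) (u : H) : ‖projSpan X I u‖ ≤ ‖u‖ := by
  have h : ⟪u - projSpan X I u, projSpan X I u⟫ = 0 :=
    Submodule.starProjection_inner_eq_zero (K := hSpan X I) u (projSpan X I u)
      (Submodule.orthogonalProjectionOnto (hSpan X I) u).2
  have hpyth : ‖u‖ ^ 2 = ‖projSpan X I u‖ ^ 2 + ‖u - projSpan X I u‖ ^ 2 := by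
    have hns := norm_sub_sq_real (u - projSpan X I u) (- projSpan X I u)
    simp only [sub_neg_eq_add, sub_add_cancel, inner_neg_right, h, norm_neg] at hns
    linarith
  nlinarith [norm_nonneg (u - projSpan X I u), norm_nonneg u, norm_nonneg (projSpan X I u)]

include hstat in
private lemma gamma_symm (h : ℤ) : γ (-h) = γ h := by
  have h1 := hstat 0 h; have h2 := hstat h 0
  rw [real_inner_comm] at h1
  simp only [sub_zero, zero_sub] at h1 h2
  rw [← h1, ← h2]

include hstat in
private lemma norm_X (s : ℤ) : ‖X s‖ ^ 2 = γ 0 := by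
  have := hstat s s
  rwa [real_inner_self_eq_norm_sq, sub_self] at this

include hstat hπ in
private lemma summ_pi (t : ℤ) : Summable fun i : ℕ => π (i + 1) • X (t - (i + 1 : ℕ)) := by
  apply Summable.of_norm
  have hb : ∀ i : ℕ, ‖π (i + 1) • X (t - (i + 1 : ℕ))‖ ≤ |π (i + 1)| * Real.sqrt (γ 0) := by
    intro i
    rw [norm_smul, Real.norm_eq_abs]
    have hx : ‖X (t - (i + 1 : ℕ))‖ = Real.sqrt (γ 0) := by
      rw [← norm_X X γ hstat (t - (i + 1 : ℕ)), Real.sqrt_sq (norm_nonneg _)]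
    rw [hx]
  exact Summable.of_nonneg_of_le (fun i => norm_nonneg _) hb
    (((summable_nat_add_iff 1).2 hπ).mul_right _)

include hstat hπ heps_orth heps_var in
private lemma eps_inner_self (t : ℤ) : ⟪arEps X π t, X t⟫ = σε2 := by
  have hX : X t = arEps X π t + ∑' i : ℕ, π (i + 1) • X (t - (i + 1 : ℕ)) := by
    rw [arEps]; abel
  rw [hX, inner_add_right, real_inner_self_eq_norm_sq, heps_var t]
  have h0 : ⟪arEps X π t, ∑' i : ℕ, π (i + 1) • X (t - (i + 1 : ℕ))⟫ = 0 := by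
    rw [← InnerProductSpace.toDual_apply_apply,
      ContinuousLinearMap.map_tsum _ (summ_pi X γ π hstat hπ t)]
    have hz : ∀ i : ℕ, (InnerProductSpace.toDual ℝ H (arEps X π t))
        (π (i + 1) • X (t - (i + 1 : ℕ))) = 0 := by
      intro i
      rw [InnerProductSpace.toDual_apply_apply, inner_smul_right,
        heps_orth t (t - (i + 1 : ℕ)) (by push_cast; omega), mul_zero]
    rw [tsum_congr hz, tsum_zero]
  rw [h0, add_zero]

include hstat hπ heps_orth heps_var hσε in
private lemma lin_indep : ∀ s : Finset ℤ, ∀ c : ℤ → ℝ,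
    (∑ r ∈ s, c r • X r) = 0 → ∀ r ∈ s, c r = 0 := by
  intro s
  induction s using Finset.induction_on_max with
  | empty => intro c _ r hr; exact absurd hr (Finset.notMem_empty r)
  | insert a s ha ih =>
    intro c hc r hr
    have hca : c a = 0 := by
      have hsum : ⟪arEps X π a, ∑ r ∈ insert a s, c r • X r⟫ = 0 := by
        rw [hc, inner_zero_right]
      rw [inner_sum] at hsum
      have hterm : ∀ r ∈ insert a s,
          ⟪arEps X π a, c r • X r⟫ = if r = a then c a * σε2 else 0 := by
        intro r hrm
        rcases Finset.mem_insert.1 hrm with h | h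
        · subst h; rw [if_pos rfl, inner_smul_right,
            eps_inner_self X γ π σε2 hstat hπ heps_orth heps_var]
        · have : r < a := ha r h
          rw [if_neg (by omega), inner_smul_right, heps_orth a r (by omega), mul_zero]
      rw [Finset.sum_congr rfl hterm, Finset.sum_ite_eq' _ a,
        if_pos (Finset.mem_insert_self a s)] at hsum
      rcases mul_eq_zero.1 hsum with h | h
      · exact h
      · exact absurd h (ne_of_gt hσε)
    have hnas : a ∉ s := fun h => lt_irrefl a (ha a h)
    have hs0 : (∑ r ∈ s, c r • X r) = 0 := by
      rw [Finset.sum_insert hnas, hca, zero_smul, zero_add] at hc; exact hc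
    rcases Finset.mem_insert.1 hr with h | h
    · exact h ▸ hca
    · exact ih c hs0 r h

include hstat hπ heps_orth heps_var hσε in
private lemma lin_indep_nat (k : ℕ) (t : ℤ) (c : ℕ → ℝ)
    (hc : (∑ j ∈ Finset.Icc 1 k, c j • X (t - (j : ℕ))) = 0) :
    ∀ j ∈ Finset.Icc 1 k, c j = 0 := by
  intro j hj
  have hsum : (∑ r ∈ Finset.Icc (t - k) (t - 1), (fun r => c (t - r).toNat) r • X r) = 0 := by
    rw [← sum_shift (fun r => c (t - r).toNat • X r) t k]
    have : ∀ j' ∈ Finset.Icc 1 k, c (t - (t - (j' : ℕ))).toNat • X (t - (j' : ℕ))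
        = c j' • X (t - (j' : ℕ)) := by
      intro j' _; congr 2; omega
    rw [Finset.sum_congr rfl this]; exact hc
  have := lin_indep X γ π σε2 hstat hπ heps_orth heps_var hσε
    (Finset.Icc (t - k) (t - 1)) (fun r => c (t - r).toNat) hsum (t - j)
    (by simp only [Finset.mem_Icc] at *; omega)
  simpa only [sub_sub_cancel, Int.toNat_natCast] using this

variable (φ : ℕ → ℕ → ℝ)
  (hφ : ∀ k : ℕ, 1 ≤ k → ∀ t : ℤ,
      projSpan X (Set.Icc (t - k) (t - 1)) (X t) = ∑ j ∈ Finset.Icc 1 k, φ k j • X (t - j))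

include hstat hφ in
private lemma fwdE {k : ℕ} (hk : 1 ≤ k) {i : ℤ} (h1 : 1 ≤ i) (h2 : i ≤ k) :
    γ i = ∑ j ∈ Finset.Icc 1 k, φ k j * γ (i - j) := by
  have hmem : (-i) ∈ Set.Icc ((0:ℤ) - k) (0 - 1) := by
    simp only [Set.mem_Icc]; omega
  have h0 := projSpan_res_orth X (X 0) hmem
  rw [hφ k hk 0] at h0
  rw [inner_sub_left, sum_inner] at h0
  have hA : ⟪X (0:ℤ), X (-i)⟫ = γ i := by
    rw [hstat, show -i - 0 = -i by ring, gamma_symm X γ hstat i]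
  have hB : ∀ j ∈ Finset.Icc 1 k, ⟪φ k j • X ((0:ℤ) - j), X (-i)⟫ = φ k j * γ (i - j) := by
    intro j hj
    rw [real_inner_smul_left, hstat,
      show (-i - ((0:ℤ) - (j:ℕ))) = -(i - j) by ring, gamma_symm X γ hstat (i - (j:ℕ))]
  rw [hA, Finset.sum_congr rfl hB] at h0
  linarith

include hstat hφ in
private lemma bk {k : ℕ} (hk : 1 ≤ k) (t : ℤ) :
    projSpan X (Set.Icc (t - (k:ℕ)) (t - 1)) (X (t - (k + 1 : ℕ))) =
      ∑ j ∈ Finset.Icc 1 k, φ k j • X (t - (k + 1 : ℕ) + j) := by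
  apply projSpan_eq
  · apply Submodule.sum_mem
    intro j hj
    simp only [Finset.mem_Icc] at hj
    apply Submodule.smul_mem
    exact mem_hSpan X (by simp only [Set.mem_Icc]; push_cast; omega)
  · intro s hs
    simp only [Set.mem_Icc] at hs
    rw [inner_sub_left, sum_inner, hstat]
    have hB : ∀ j ∈ Finset.Icc 1 k,
        ⟪φ k j • X (t - (k + 1 : ℕ) + j), X s⟫ = φ k j * γ ((s - t + k + 1) - j) := by
      intro j hj
      rw [real_inner_smul_left, hstat]
      congr 2
      push_cast; ring
    rw [Finset.sum_congr rfl hB,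
      show s - (t - (k + 1 : ℕ)) = s - t + k + 1 by push_cast; ring]
    have := fwdE X γ hstat φ hφ hk (i := s - t + k + 1) (by omega) (by omega)
    linarith

include hstat hπ heps_orth heps_var hσε hφ in
private lemma dl {k : ℕ} (hk : 1 ≤ k) {n : ℕ} (h1 : 1 ≤ n) (h2 : n ≤ k) :
    φ (k+1) n = φ k n - φ (k+1) (k+1) * φ k (k+1-n) := by
  set b : H := ∑ j ∈ Finset.Icc 1 k, φ k j • X ((0:ℤ) - (k + 1 : ℕ) + j) with hb
  set v : H := X ((0:ℤ) - (k + 1 : ℕ)) - b with hv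
  set u : H := X (0:ℤ) - ∑ j ∈ Finset.Icc 1 k, φ k j • X ((0:ℤ) - (j:ℕ)) with hu
  have hbk := bk X γ hstat φ hφ hk 0
  have hv_orth : ∀ s ∈ Set.Icc ((0:ℤ) - (k:ℕ)) (0 - 1), ⟪v, X s⟫ = 0 := by
    intro s hs
    have := projSpan_res_orth X (X ((0:ℤ) - (k + 1 : ℕ))) hs
    rwa [hbk] at this
  have hu_orth : ∀ s ∈ Set.Icc ((0:ℤ) - (k:ℕ)) (0 - 1), ⟪u, X s⟫ = 0 := by
    intro s hs
    have := projSpan_res_orth X (X (0:ℤ)) hs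
    rwa [hφ k hk 0] at this
  have hb2 : b = ∑ j ∈ Finset.Icc 1 k, φ k (k + 1 - j) • X ((0:ℤ) - (j:ℕ)) := by
    rw [hb, sum_reflect (fun j => φ k j • X ((0:ℤ) - (k + 1 : ℕ) + j)) k]
    apply Finset.sum_congr rfl
    intro j hj
    simp only [Finset.mem_Icc] at hj
    rw [show (0:ℤ) - (k + 1 : ℕ) + ((k + 1 - j : ℕ) : ℤ) = 0 - (j:ℕ) by omega]
  have hQ : ⟪v, X ((0:ℤ) - (k + 1 : ℕ))⟫ = ‖v‖ ^ 2 := by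
    have hXv : X ((0:ℤ) - (k + 1 : ℕ)) = v + b := by rw [hv]; abel
    rw [hXv, inner_add_right, real_inner_self_eq_norm_sq]
    have hvb : ⟪v, b⟫ = 0 := by
      rw [hb, inner_sum]
      apply Finset.sum_eq_zero
      intro j hj
      simp only [Finset.mem_Icc] at hj
      rw [real_inner_smul_right, hv_orth ((0:ℤ) - (k + 1 : ℕ) + j)
        (by simp only [Set.mem_Icc]; push_cast; omega), mul_zero]
    rw [hvb, add_zero]
  have hvpos : (0:ℝ) < ‖v‖ ^ 2 := by
    rcases eq_or_lt_of_le (sq_nonneg ‖v‖) with h | h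
    · exfalso
      have hv0 : v = 0 := by
        have := h.symm
        rw [pow_eq_zero_iff (by norm_num)] at this
        exact norm_eq_zero.1 this
      set c : ℕ → ℝ := fun j => if j = k + 1 then 1 else -(φ k (k + 1 - j)) with hc
      have hcsum : (∑ j ∈ Finset.Icc 1 (k+1), c j • X ((0:ℤ) - (j:ℕ))) = 0 := by
        rw [Finset.sum_Icc_succ_top (by omega : 1 ≤ k + 1)]
        have hcongr : ∀ j ∈ Finset.Icc 1 k, c j • X ((0:ℤ) - (j:ℕ))
            = -(φ k (k + 1 - j) • X ((0:ℤ) - (j:ℕ))) := by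
          intro j hj
          simp only [Finset.mem_Icc] at hj
          rw [hc]
          simp only [if_neg (by omega : ¬ j = k + 1), neg_smul]
        have hX : X ((0:ℤ) - (k + 1 : ℕ)) = b := by
          have := hv0
          rw [hv, sub_eq_zero] at this
          exact this
        rw [Finset.sum_congr rfl hcongr, Finset.sum_neg_distrib, ← hb2,
          show c (k+1) = 1 from by simp [hc], one_smul, hX]
        exact neg_add_cancel b
      have := lin_indep_nat X γ π σε2 hstat hπ heps_orth heps_var hσε (k+1) 0 c hcsum
        (k+1) (by simp only [Finset.mem_Icc]; omega)
      rw [show c (k+1) = 1 from by simp [hc]] at this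
      exact one_ne_zero this
    · exact h
  set c : ℝ := ⟪u, X ((0:ℤ) - (k + 1 : ℕ))⟫ / ‖v‖ ^ 2 with hcdef
  have hproj : projSpan X (Set.Icc ((0:ℤ) - (k + 1 : ℕ)) (0 - 1)) (X 0)
      = (∑ j ∈ Finset.Icc 1 k, φ k j • X ((0:ℤ) - (j:ℕ))) + c • v := by
    apply projSpan_eq
    · apply Submodule.add_mem
      · apply Submodule.sum_mem
        intro j hj
        simp only [Finset.mem_Icc] at hj
        exact Submodule.smul_mem _ _
          (mem_hSpan X (by simp only [Set.mem_Icc]; push_cast; omega))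
      · apply Submodule.smul_mem
        rw [hv]
        apply Submodule.sub_mem
        · exact mem_hSpan X (by simp only [Set.mem_Icc]; push_cast; omega)
        · apply Submodule.sum_mem
          intro j hj
          simp only [Finset.mem_Icc] at hj
          exact Submodule.smul_mem _ _
            (mem_hSpan X (by simp only [Set.mem_Icc]; push_cast; omega))
    · intro s hs
      simp only [Set.mem_Icc] at hs
      have hres : X (0:ℤ) - ((∑ j ∈ Finset.Icc 1 k, φ k j • X ((0:ℤ) - (j:ℕ))) + c • v)
          = u - c • v := by rw [hu]; abel
      rw [hres, inner_sub_left, real_inner_smul_left]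
      rcases eq_or_ne s ((0:ℤ) - (k + 1 : ℕ)) with h | h
      · subst h
        rw [hQ]
        have hu' : ⟪u, X ((0:ℤ) - (k + 1 : ℕ))⟫ = c * ‖v‖ ^ 2 := by
          rw [hcdef, div_mul_cancel₀ _ (ne_of_gt hvpos)]
        rw [hu']
        ring
      · have hs' : s ∈ Set.Icc ((0:ℤ) - (k:ℕ)) (0 - 1) := by
          simp only [Set.mem_Icc]
          push_cast at hs h ⊢
          omega
        rw [hu_orth s hs', hv_orth s hs', mul_zero, sub_zero]
  have hexp : ∑ j ∈ Finset.Icc 1 (k+1), φ (k+1) j • X ((0:ℤ) - (j:ℕ))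
      = (∑ j ∈ Finset.Icc 1 k, φ k j • X ((0:ℤ) - (j:ℕ))) + c • v := by
    rw [← hproj, hφ (k+1) (by omega) 0]
  set d : ℕ → ℝ := fun j => if j = k + 1 then φ (k+1) (k+1) - c
      else φ (k+1) j - (φ k j - c * φ k (k + 1 - j)) with hd
  have hzero : (∑ j ∈ Finset.Icc 1 (k+1), d j • X ((0:ℤ) - (j:ℕ))) = 0 := by
    rw [Finset.sum_Icc_succ_top (by omega : 1 ≤ k + 1)] at hexp ⊢
    have hcongr : ∀ j ∈ Finset.Icc 1 k, d j • X ((0:ℤ) - (j:ℕ))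
        = φ (k+1) j • X ((0:ℤ) - (j:ℕ)) - φ k j • X ((0:ℤ) - (j:ℕ))
          + c • (φ k (k + 1 - j) • X ((0:ℤ) - (j:ℕ))) := by
      intro j hj
      simp only [Finset.mem_Icc] at hj
      rw [hd]
      simp only [if_neg (by omega : ¬ j = k + 1), sub_smul, smul_smul]
      abel
    rw [Finset.sum_congr rfl hcongr,
      show d (k+1) = φ (k+1) (k+1) - c from by simp [hd], sub_smul]
    simp only [Finset.sum_add_distrib, Finset.sum_sub_distrib, ← Finset.smul_sum, ← hb2]
    rw [hv] at hexp
    have := hexp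
    rw [smul_sub] at this
    -- this : Σφ(k+1) + φ(k+1)(k+1)•XK = Σφk + (c•XK - c•b)
    linear_combination (norm := module) this
  have hdz := lin_indep_nat X γ π σε2 hstat hπ heps_orth heps_var hσε (k+1) 0 d hzero
  have hck : c = φ (k+1) (k+1) := by
    have := hdz (k+1) (by simp only [Finset.mem_Icc]; omega)
    rw [show d (k+1) = φ (k+1) (k+1) - c from by simp [hd]] at this
    linarith
  have := hdz n (by simp only [Finset.mem_Icc]; omega)
  rw [hd] at this
  simp only [if_neg (by omega : ¬ n = k + 1)] at this
  rw [← hck]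
  linarith

private lemma key_id (Y : H) (Q : ℝ)
    (hYo : ∀ r : ℤ, r ≠ 0 → ⟪X r, Y⟫ = 0) (hY0 : ⟪X 0, Y⟫ = Q)
    {k j : ℕ} (hk : 1 ≤ k) (h1 : 1 ≤ j) (h2 : j ≤ k)
    (hφ : ∀ k : ℕ, 1 ≤ k → ∀ t : ℤ,
      projSpan X (Set.Icc (t - k) (t - 1)) (X t) = ∑ i ∈ Finset.Icc 1 k, φ k i • X (t - i)) :
    ⟪projSpan X (Set.Icc ((j:ℤ) - k) ((j:ℤ) - 1)) (X j), Y⟫ = φ k j * Q := by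
  rw [hφ k hk j, sum_inner]
  rw [Finset.sum_eq_single j (fun i _ hij => by
      rw [real_inner_smul_left, hYo ((j:ℤ) - i) (by omega), mul_zero])
    (fun hj => absurd (by simp only [Finset.mem_Icc]; omega) hj)]
  rw [real_inner_smul_left, show (j:ℤ) - (j:ℕ) = 0 by omega, hY0]

private lemma Y_is_orth (r : ℤ) (hr : r ≠ 0) :
    ⟪X r, X 0 - projSpan X (Set.Iic (-1) ∪ Set.Ici 1) (X 0)⟫ = 0 := by
  rw [real_inner_comm]
  exact projSpan_res_orth X (X 0)
    (by simp only [Set.mem_union, Set.mem_Iic, Set.mem_Ici]; omega)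

private lemma Y_self :
    ⟪X 0, X 0 - projSpan X (Set.Iic (-1) ∪ Set.Ici 1) (X 0)⟫
      = ‖X 0 - projSpan X (Set.Iic (-1) ∪ Set.Ici 1) (X 0)‖ ^ 2 := by
  set P := projSpan X (Set.Iic (-1) ∪ Set.Ici 1) (X 0) with hP
  have h1 : ⟪X 0 - P, P⟫ = 0 :=
    Submodule.starProjection_inner_eq_zero (K := hSpan X (Set.Iic (-1) ∪ Set.Ici 1)) (X 0) P
      (Submodule.orthogonalProjectionOnto (hSpan X (Set.Iic (-1) ∪ Set.Ici 1)) (X 0)).2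
  have h3 : ⟪X 0 - P, X 0 - P⟫ = ⟪X 0, X 0 - P⟫ - ⟪P, X 0 - P⟫ :=
    inner_sub_left _ _ _
  have h4 : ⟪P, X 0 - P⟫ = 0 := by rw [real_inner_comm]; exact h1
  have h5 : ⟪X 0 - P, X 0 - P⟫ = ‖X 0 - P‖ ^ 2 := real_inner_self_eq_norm_sq _
  linarith

include hstat hπ heps_orth hφ in
private lemma phi_tendsto (Y : H) (Q : ℝ) (hQpos : 0 < Q)
    (hYo : ∀ r : ℤ, r ≠ 0 → ⟪X r, Y⟫ = 0) (hY0 : ⟪X 0, Y⟫ = Q)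
    {n : ℕ} (hn : 1 ≤ n) :
    Tendsto (fun m : ℕ => φ (n + m) n) atTop (𝓝 (π n)) := by
  set U : ℕ → Submodule ℝ H :=
    fun m => hSpan X (Set.Icc ((n:ℤ) - (n + m : ℕ)) ((n:ℤ) - 1)) with hU
  have hUmono : Monotone U := by
    intro a b hab
    exact Submodule.topologicalClosure_mono (Submodule.span_mono (Set.image_mono
      (Set.Icc_subset_Icc (by push_cast; omega) le_rfl)))
  haveI : ∀ i, Submodule.HasOrthogonalProjection (U i) := fun i => by
    rw [hU]; infer_instance
  haveI : Submodule.HasOrthogonalProjection (⨆ i, U i).topologicalClosure := by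
    haveI : CompleteSpace ((⨆ i, U i).topologicalClosure : Submodule ℝ H) :=
      (Submodule.isClosed_topologicalClosure _).completeSpace_coe
    infer_instance
  have hconv := Submodule.starProjection_tendsto_closure_iSup (𝕜 := ℝ) U hUmono (X n)
  have hiSup : (⨆ m, U m).topologicalClosure = hSpan X (Set.Iic ((n:ℤ) - 1)) := by
    apply le_antisymm
    · apply Submodule.topologicalClosure_minimal
      · apply iSup_le
        intro m
        exact Submodule.topologicalClosure_mono (Submodule.span_mono
          (Set.image_mono (fun r hr => by
            simp only [Set.mem_Icc] at hr
            simp only [Set.mem_Iic]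
            omega)))
      · exact Submodule.isClosed_topologicalClosure _
    · have hle : Submodule.span ℝ (X '' Set.Iic ((n:ℤ) - 1)) ≤ ⨆ m, U m := by
        rw [Submodule.span_le]
        rintro - ⟨r, hr, rfl⟩
        simp only [Set.mem_Iic] at hr
        refine Submodule.mem_iSup_of_mem r.natAbs ?_
        exact mem_hSpan X (by simp only [Set.mem_Icc]; omega)
      exact Submodule.topologicalClosure_mono hle
  have hP : ((⨆ m, U m).topologicalClosure.starProjection (X n))
      = ∑' i : ℕ, π (i + 1) • X ((n:ℤ) - (i + 1 : ℕ)) := by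
    apply Submodule.eq_starProjection_of_mem_of_inner_eq_zero
    · rw [hiSup]
      have hsm := summ_pi X γ π hstat hπ (n:ℤ)
      refine (Submodule.isClosed_topologicalClosure _).mem_of_tendsto
        hsm.hasSum.tendsto_sum_nat ?_
      filter_upwards with m
      apply Submodule.sum_mem
      intro i _
      exact Submodule.smul_mem _ _
        (mem_hSpan X (by simp only [Set.mem_Iic]; push_cast; omega))
    · intro w hw
      rw [hiSup] at hw
      have harE : X (n:ℤ) - ∑' i : ℕ, π (i + 1) • X ((n:ℤ) - (i + 1 : ℕ)) = arEps X π n := rfl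
      rw [harE]
      exact orth_hSpan X (fun s hs => heps_orth n s (by simpa using hs)) w hw
  have hid : ∀ m : ℕ, φ (n + m) n
      = ⟪(U m).starProjection (X n), Y⟫ / Q := by
    intro m
    have hki := key_id X φ Y Q hYo hY0 (k := n + m) (j := n) (by omega) hn (by omega) hφ
    have hre : (U m).starProjection (X n)
        = projSpan X (Set.Icc ((n:ℤ) - (n + m : ℕ)) ((n:ℤ) - 1)) (X n) := rfl
    rw [hre, hki]
    field_simp
  have hval : ⟪(⨆ m, U m).topologicalClosure.starProjection (X n), Y⟫ / Q
      = π n := by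
    rw [hP]
    have hYt : ⟪(∑' i : ℕ, π (i + 1) • X ((n:ℤ) - (i + 1 : ℕ))), Y⟫
        = ∑' i : ℕ, π (i + 1) * ⟪X ((n:ℤ) - (i + 1 : ℕ)), Y⟫ := by
      rw [real_inner_comm, ← InnerProductSpace.toDual_apply_apply,
        ContinuousLinearMap.map_tsum _ (summ_pi X γ π hstat hπ (n:ℤ))]
      apply tsum_congr
      intro i
      rw [InnerProductSpace.toDual_apply_apply, inner_smul_right, real_inner_comm]
    have hsingle : (∑' i : ℕ, π (i + 1) * ⟪X ((n:ℤ) - (i + 1 : ℕ)), Y⟫) = π n * Q := by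
      rw [tsum_eq_single (n - 1) (fun i hi => by
        rw [hYo ((n:ℤ) - (i + 1 : ℕ)) (by push_cast; omega), mul_zero])]
      rw [show ((n:ℤ) - ((n - 1 : ℕ) + 1 : ℕ)) = 0 by push_cast; omega, hY0,
        show (n - 1) + 1 = n by omega]
    rw [hYt, hsingle]
    field_simp
  have hlim := (hconv.inner (tendsto_const_nhds (x := Y))).div_const Q
  rw [hval] at hlim
  exact hlim.congr (fun m => (hid m).symm)

include hstat hφ in
private lemma coeff_bound (Y : H) (Q : ℝ) (hQpos : 0 < Q) (hQ : Q = ‖Y‖ ^ 2)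
    (hYo : ∀ r : ℤ, r ≠ 0 → ⟪X r, Y⟫ = 0) (hY0 : ⟪X 0, Y⟫ = Q)
    {k j : ℕ} (hj1 : 1 ≤ j) (hjk : j ≤ k) :
    |φ k j| ≤ Real.sqrt (γ 0) * Real.sqrt Q / Q := by
  have hki := key_id X φ Y Q hYo hY0 (k := k) (j := j) (by omega) hj1 hjk hφ
  have hXj : ‖X (j:ℤ)‖ = Real.sqrt (γ 0) := by
    rw [← norm_X X γ hstat (j:ℤ), Real.sqrt_sq (norm_nonneg _)]
  have hYn : ‖Y‖ = Real.sqrt Q := by rw [hQ, Real.sqrt_sq (norm_nonneg _)]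
  have hb : |⟪projSpan X (Set.Icc ((j:ℤ) - k) ((j:ℤ) - 1)) (X j), Y⟫|
      ≤ Real.sqrt (γ 0) * Real.sqrt Q := by
    calc |⟪projSpan X (Set.Icc ((j:ℤ) - k) ((j:ℤ) - 1)) (X j), Y⟫|
        ≤ ‖projSpan X (Set.Icc ((j:ℤ) - k) ((j:ℤ) - 1)) (X j)‖ * ‖Y‖ :=
          abs_real_inner_le_norm _ _
      _ ≤ ‖X (j:ℤ)‖ * ‖Y‖ :=
          mul_le_mul_of_nonneg_right (projSpan_norm_le X _ _) (norm_nonneg _)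
      _ = Real.sqrt (γ 0) * Real.sqrt Q := by rw [hXj, hYn]
  rw [hki, abs_mul, abs_of_pos hQpos] at hb
  rw [le_div_iff₀ hQpos]
  exact hb

end Aux

/-- If `limsup |φ_{nn}|^{1/n} < 1`, then for every `n ≥ 1` the series
`Σ_{h≥1} φ_{n+h,n+h} φ_{n+h−1,h}` converges absolutely and the AR(∞) coefficient satisfies
`π_n = φ_{nn} − Σ_{h≥1} φ_{n+h,n+h} φ_{n+h−1,h}`. -/
theorem ar_coeff_eq_pacf_sub_series
    {H : Type*} [NormedAddCommGroup H] [InnerProductSpace ℝ H] [CompleteSpace H]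
    (X : ℤ → H) (γ : ℤ → ℝ) (π : ℕ → ℝ) (σε2 : ℝ)
    (hstat : ∀ s t : ℤ, ⟪X s, X t⟫ = γ (t - s))
    (hπ : Summable fun i : ℕ => |π i|)
    (heps_orth : ∀ t s : ℤ, s ≤ t - 1 → ⟪arEps X π t, X s⟫ = 0)
    (heps_var : ∀ t : ℤ, ‖arEps X π t‖ ^ 2 = σε2)
    (hσε : 0 < σε2)
    (hmin : 0 < ‖X 0 - projSpan X (Set.Iic (-1) ∪ Set.Ici 1) (X 0)‖ ^ 2)
    (φ : ℕ → ℕ → ℝ)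
    (hφ : ∀ k : ℕ, 1 ≤ k → ∀ t : ℤ,
      projSpan X (Set.Icc (t - k) (t - 1)) (X t) = ∑ j ∈ Finset.Icc 1 k, φ k j • X (t - j))
    (hlt : Filter.limsup (fun n : ℕ => |φ n n| ^ (1 / (n : ℝ))) Filter.atTop < 1) :
    ∀ n : ℕ, 1 ≤ n →
      Summable (fun h : ℕ => |φ (n + h + 1) (n + h + 1) * φ (n + h) (h + 1)|) ∧
      π n = φ n n - ∑' h : ℕ, φ (n + h + 1) (n + h + 1) * φ (n + h) (h + 1) := by
  intro n hn
  set Y : H := X 0 - projSpan X (Set.Iic (-1) ∪ Set.Ici 1) (X 0) with hY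
  set Q : ℝ := ‖Y‖ ^ 2 with hQdef
  have hQpos : 0 < Q := hmin
  have hYo : ∀ r : ℤ, r ≠ 0 → ⟪X r, Y⟫ = 0 := fun r hr => Y_is_orth X r hr
  have hY0 : ⟪X 0, Y⟫ = Q := Y_self X
  set C : ℝ := Real.sqrt (γ 0) * Real.sqrt Q / Q with hC
  have hCb : ∀ k j : ℕ, 1 ≤ j → j ≤ k → |φ k j| ≤ C := fun k j h1 h2 =>
    coeff_bound X γ hstat φ hφ Y Q hQpos rfl hYo hY0 h1 h2
  have hC0 : 0 ≤ C := le_trans (abs_nonneg _) (hCb 1 1 le_rfl le_rfl)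
  set L : ℝ := Filter.limsup (fun m : ℕ => |φ m m| ^ (1 / (m : ℝ))) Filter.atTop with hL
  set r : ℝ := (max L 0 + 1) / 2 with hr
  have hmax1 : max L 0 < 1 := max_lt hlt one_pos
  have hmax0 : 0 ≤ max L 0 := le_max_right _ _
  have hr0 : 0 ≤ r := by rw [hr]; linarith
  have hr1 : r < 1 := by rw [hr]; linarith
  have hLr : L < r := by
    have : L ≤ max L 0 := le_max_left _ _
    rw [hr]; linarith
  have hbdd : Filter.IsBoundedUnder (· ≤ ·) Filter.atTop
      (fun m : ℕ => |φ m m| ^ (1 / (m : ℝ))) := by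
    refine ⟨C + 1, Filter.eventually_map.2 (Filter.Eventually.of_forall fun m => ?_)⟩
    rcases Nat.eq_zero_or_pos m with hm | hm
    · subst hm
      have h00 : |φ 0 0| ^ (1 / ((0:ℕ) : ℝ)) = 1 := by norm_num
      rw [h00]
      linarith
    · have h1 : |φ m m| ^ (1 / (m : ℝ)) ≤ (C + 1) ^ (1 / (m : ℝ)) :=
        Real.rpow_le_rpow (abs_nonneg _) (by linarith [hCb m m hm le_rfl])
          (by positivity)
      have h2 : (C + 1) ^ (1 / (m : ℝ)) ≤ (C + 1) ^ (1 : ℝ) :=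
        Real.rpow_le_rpow_of_exponent_le (by linarith)
          (by
            rw [div_le_one (by exact_mod_cast hm)]
            exact_mod_cast hm)
      rw [Real.rpow_one] at h2
      linarith
  have hev := Filter.eventually_lt_of_limsup_lt hLr hbdd
  obtain ⟨N₀, hN₀⟩ := Filter.eventually_atTop.1 hev
  have hgeo : ∀ m : ℕ, max N₀ 1 ≤ m → |φ m m| ≤ r ^ m := by
    intro m hm
    have hm1 : 1 ≤ m := le_trans (le_max_right _ _) hm
    have h := hN₀ m (le_trans (le_max_left _ _) hm)
    have h0 : (0:ℝ) ≤ |φ m m| := abs_nonneg _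
    have hkey : |φ m m| = (|φ m m| ^ ((1:ℝ) / m)) ^ (m : ℕ) := by
      rw [← Real.rpow_natCast (|φ m m| ^ ((1:ℝ) / m)) m, ← Real.rpow_mul h0,
        one_div, inv_mul_cancel₀ (Nat.cast_ne_zero.2 (by omega) : (m:ℝ) ≠ 0),
        Real.rpow_one]
    rw [hkey]
    exact pow_le_pow_left₀ (Real.rpow_nonneg h0 _) (le_of_lt h) m
  set N : ℕ := max N₀ 1 with hN
  set f : ℕ → ℝ := fun h => φ (n + h + 1) (n + h + 1) * φ (n + h) (h + 1) with hf
  have habs : Summable fun h : ℕ => |f h| := by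
    rw [← summable_nat_add_iff N]
    refine Summable.of_nonneg_of_le (fun h => abs_nonneg _) (fun h => ?_)
      ((summable_geometric_of_lt_one hr0 hr1).mul_left C)
    rw [hf]
    simp only []
    rw [abs_mul]
    have h1 : |φ (n + (h + N) + 1) (n + (h + N) + 1)| ≤ r ^ (n + (h + N) + 1) :=
      hgeo _ (by omega)
    have h2 : r ^ (n + (h + N) + 1) ≤ r ^ h :=
      pow_le_pow_of_le_one hr0 (le_of_lt hr1) (by omega)
    have h3 : |φ (n + (h + N)) (h + N + 1)| ≤ C := hCb _ _ (by omega) (by omega)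
    calc |φ (n + (h + N) + 1) (n + (h + N) + 1)| * |φ (n + (h + N)) (h + N + 1)|
        ≤ r ^ h * C :=
          mul_le_mul (h1.trans h2) h3 (abs_nonneg _) (pow_nonneg hr0 _)
      _ = C * r ^ h := mul_comm _ _
  refine ⟨habs, ?_⟩
  have hsum : Summable f := habs.of_abs
  have htel : ∀ m : ℕ, (∑ h ∈ Finset.range m, f h) = φ n n - φ (n + m) n := by
    intro m
    induction m with
    | zero => simp
    | succ m ih =>
      rw [Finset.sum_range_succ, ih, hf]
      have hdl := dl X γ π σε2 hstat hπ heps_orth heps_var hσε φ hφ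
        (k := n + m) (by omega) (n := n) hn (by omega)
      rw [show n + m + 1 - n = m + 1 by omega] at hdl
      rw [show n + (m + 1) = n + m + 1 by omega]
      simp only []
      linarith
  have hlim1 := hsum.hasSum.tendsto_sum_nat
  have hlim2 : Filter.Tendsto (fun m : ℕ => φ n n - φ (n + m) n) Filter.atTop
      (𝓝 (φ n n - π n)) :=
    tendsto_const_nhds.sub
      (phi_tendsto X γ π hstat hπ heps_orth φ hφ Y Q hQpos hYo hY0 hn)
  have heq : (∑' h : ℕ, f h) = φ n n - π n :=
    tendsto_nhds_unique hlim1 (hlim2.congr fun m => (htel m).symm)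
  linarith
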